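/- Let G + Δ_{i₀j₀} denote the graph obtained from a connected graph G by perturbing the weight of edge [i₀, j₀] by Δ (with 1 + Δ R_{i₀j₀} > 0). Then the resulting change in effective resistance between any vertices i and j is ΔR_ij = −Δ (R_{i i₀} + R_{j j₀} − R_{i j₀} − R_{j i₀})² / (4(1 + Δ R_{i₀j₀})). -/
import Mathlib


open Matrix Finset

/-- `A` is a (weighted) adjacency matrix: symmetric, nonnegative, no self-loops. -/
def IsAdjMat {n : ℕ} (A : Matrix (Fin n) (Fin n) ℝ) : Prop :=
  A.IsSymm ∧ (∀ i j, 0 ≤ A i j) ∧ ∀ i, A i i = 0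

/-- Combinatorial Laplacian `L = D - A`. -/
def lap {n : ℕ} (A : Matrix (Fin n) (Fin n) ℝ) : Matrix (Fin n) (Fin n) ℝ :=
  Matrix.diagonal (fun i => ∑ j, A i j) - A

/-- Connectivity: the kernel of the Laplacian is spanned by the all-ones vector. -/
def IsConnectedLap {n : ℕ} (L : Matrix (Fin n) (Fin n) ℝ) : Prop :=
  ∀ v : Fin n → ℝ, L.mulVec v = 0 → ∃ c : ℝ, v = fun _ => c

/-- `Ld` is the Moore–Penrose pseudoinverse of `L`. -/
def IsMoorePenrose {n : ℕ} (L Ld : Matrix (Fin n) (Fin n) ℝ) : Prop :=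
  L * Ld * L = L ∧ Ld * L * Ld = Ld ∧ (L * Ld)ᵀ = L * Ld ∧ (Ld * L)ᵀ = Ld * L

/-- Effective resistance `R_ij = L†_ii + L†_jj - 2 L†_ij`. -/
def effR {n : ℕ} (Ld : Matrix (Fin n) (Fin n) ℝ) (i j : Fin n) : ℝ :=
  Ld i i + Ld j j - 2 * Ld i j

namespace EffRAux

variable {n : ℕ}

lemma mul_vecMulVec (M : Matrix (Fin n) (Fin n) ℝ) (a b : Fin n → ℝ) :
    M * vecMulVec a b = vecMulVec (M *ᵥ a) b := by
  ext i j; simp [Matrix.mul_apply, vecMulVec_apply, mulVec, dotProduct, Finset.sum_mul, mul_assoc]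

lemma vecMulVec_mul (M : Matrix (Fin n) (Fin n) ℝ) (a b : Fin n → ℝ) :
    vecMulVec a b * M = vecMulVec a (b ᵥ* M) := by
  ext i j; simp [Matrix.mul_apply, vecMulVec_apply, vecMul, dotProduct, Finset.mul_sum, mul_assoc]

lemma vecMulVec_mul_vecMulVec (a b c d : Fin n → ℝ) :
    vecMulVec a b * vecMulVec c d = (b ⬝ᵥ c) • vecMulVec a d := by
  ext i j
  simp only [Matrix.mul_apply, vecMulVec_apply, Matrix.smul_apply, smul_eq_mul, dotProduct,
    Finset.mul_sum, Finset.sum_mul]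
  exact Finset.sum_congr rfl fun k _ => by ring

lemma vecMulVec_transpose (a b : Fin n → ℝ) : (vecMulVec a b)ᵀ = vecMulVec b a := by
  ext i j; simp [vecMulVec_apply, mul_comm]

/-- Uniqueness of the Moore–Penrose pseudoinverse. -/
lemma mp_unique {A B C : Matrix (Fin n) (Fin n) ℝ}
    (hB : IsMoorePenrose A B) (hC : IsMoorePenrose A C) : B = C := by
  obtain ⟨hB1, hB2, hB3, hB4⟩ := hB
  obtain ⟨hC1, hC2, hC3, hC4⟩ := hC
  have e2 : Aᵀ = Aᵀ * Cᵀ * Aᵀ := by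
    conv_lhs => rw [← hC1]
    simp [Matrix.transpose_mul, Matrix.mul_assoc]
  have hAB : A * B = A * C := by
    calc A * B = Bᵀ * Aᵀ := by rw [← Matrix.transpose_mul, hB3]
      _ = Bᵀ * (Aᵀ * Cᵀ * Aᵀ) := by rw [← e2]
      _ = (Bᵀ * Aᵀ) * (Cᵀ * Aᵀ) := by noncomm_ring
      _ = (A * B)ᵀ * (A * C)ᵀ := by rw [Matrix.transpose_mul, Matrix.transpose_mul]
      _ = (A * B) * (A * C) := by rw [hB3, hC3]
      _ = (A * B * A) * C := by noncomm_ring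
      _ = A * C := by rw [hB1]
  have hBA : B * A = C * A := by
    calc B * A = Aᵀ * Bᵀ := by rw [← Matrix.transpose_mul, hB4]
      _ = (Aᵀ * Cᵀ * Aᵀ) * Bᵀ := by rw [← e2]
      _ = (Aᵀ * Cᵀ) * (Aᵀ * Bᵀ) := by noncomm_ring
      _ = (C * A)ᵀ * (B * A)ᵀ := by rw [Matrix.transpose_mul, Matrix.transpose_mul]
      _ = (C * A) * (B * A) := by rw [hB4, hC4]
      _ = C * (A * B * A) := by noncomm_ring
      _ = C * A := by rw [hB1]
  calc B = B * A * B := hB2.symm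
    _ = (C * A) * B := by rw [hBA]
    _ = C * (A * B) := by noncomm_ring
    _ = C * (A * C) := by rw [hAB]
    _ = C * A * C := by noncomm_ring
    _ = C := hC2

lemma mp_transpose {A B : Matrix (Fin n) (Fin n) ℝ} (h : IsMoorePenrose A B) :
    IsMoorePenrose Aᵀ Bᵀ := by
  obtain ⟨h1, h2, h3, h4⟩ := h
  have eAB : Aᵀ * Bᵀ = B * A := by rw [← Matrix.transpose_mul, h4]
  have eBA : Bᵀ * Aᵀ = A * B := by rw [← Matrix.transpose_mul, h3]
  refine ⟨?_, ?_, ?_, ?_⟩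
  · calc Aᵀ * Bᵀ * Aᵀ = (A * B * A)ᵀ := by simp [Matrix.transpose_mul, Matrix.mul_assoc]
      _ = Aᵀ := by rw [h1]
  · calc Bᵀ * Aᵀ * Bᵀ = (B * A * B)ᵀ := by simp [Matrix.transpose_mul, Matrix.mul_assoc]
      _ = Bᵀ := by rw [h2]
  · rw [eAB, h4]
  · rw [eBA, h3]

end EffRAux

open EffRAux in
/-- Change in effective resistance under a single-edge perturbation: if the Laplacian is
perturbed to `L + Δ ∇∇ᵀ` with `∇ = e_{i₀} - e_{j₀}` (and `1 + Δ R_{i₀j₀} > 0`, the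
perturbed graph remaining connected), then for all `i, j`,
`ΔR_ij = -Δ (R_{i i₀} + R_{j j₀} - R_{i j₀} - R_{j i₀})² / (4(1 + Δ R_{i₀j₀}))`. -/
theorem effR_single_edge_perturbation (n : ℕ)
    (A L Ld : Matrix (Fin n) (Fin n) ℝ)
    (hA : IsAdjMat A) (hL : L = lap A) (hconn : IsConnectedLap L)
    (hMP : IsMoorePenrose L Ld)
    (i₀ j₀ : Fin n) (hne : i₀ ≠ j₀) (Δ : ℝ)
    (L₂ Ld₂ : Matrix (Fin n) (Fin n) ℝ)
    (hL₂ : L₂ = L + Δ • Matrix.vecMulVec (Pi.single i₀ 1 - Pi.single j₀ 1)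
        (Pi.single i₀ 1 - Pi.single j₀ 1))
    (hconn₂ : IsConnectedLap L₂) (hMP₂ : IsMoorePenrose L₂ Ld₂)
    (hpos : 0 < 1 + Δ * effR Ld i₀ j₀)
    (i j : Fin n) :
    effR Ld₂ i j - effR Ld i j
      = -(Δ * (effR Ld i i₀ + effR Ld j j₀ - effR Ld i j₀ - effR Ld j i₀) ^ 2)
          / (4 * (1 + Δ * effR Ld i₀ j₀)) := by
  set g : Fin n → ℝ := Pi.single i₀ 1 - Pi.single j₀ 1 with hg
  have hLs : Lᵀ = L := by
    rw [hL]
    unfold lap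
    rw [Matrix.transpose_sub, Matrix.diagonal_transpose, hA.1]
  have hLds : Ldᵀ = Ld := by
    have := mp_transpose hMP
    rw [hLs] at this
    exact mp_unique this hMP
  obtain ⟨h1, h2, h3, h4⟩ := hMP
  have hPP : L * Ld = Ld * L := by
    rw [← h3, Matrix.transpose_mul, hLs, hLds]
  have hL1 : L *ᵥ (fun _ => (1 : ℝ)) = 0 := by
    rw [hL]
    ext k
    simp [lap, Matrix.sub_mulVec, mulVec, dotProduct, Matrix.diagonal]
  have hsum_g : ∑ k, g k = 0 := by
    simp [hg, Finset.sum_sub_distrib, Finset.sum_pi_single]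
  have hfix : (Ld * L) *ᵥ g = g := by
    set v : Fin n → ℝ := g - (Ld * L) *ᵥ g with hv
    have hLv : L *ᵥ v = 0 := by
      rw [hv, Matrix.mulVec_sub, Matrix.mulVec_mulVec, ← Matrix.mul_assoc]
      rw [h1, sub_self]
    obtain ⟨c, hc⟩ := hconn v hLv
    have hsv : ∑ k, v k = 0 := by
      have hproj : (fun _ => (1:ℝ)) ᵥ* (Ld * L) = 0 := by
        have e : (fun _ => (1:ℝ)) ᵥ* (Ld * L) = ((Ld * L)ᵀ) *ᵥ (fun _ => (1:ℝ)) := by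
          rw [Matrix.mulVec_transpose]
        rw [e, h4, ← Matrix.mulVec_mulVec, hL1, Matrix.mulVec_zero]
      have e2 : ∑ k, ((Ld * L) *ᵥ g) k = 0 := by
        have h5 : (fun _ => (1:ℝ)) ⬝ᵥ ((Ld * L) *ᵥ g) = ((fun _ => (1:ℝ)) ᵥ* (Ld * L)) ⬝ᵥ g :=
          (Matrix.dotProduct_mulVec _ _ _)
        simpa [dotProduct, hproj] using h5
      simp [hv, Finset.sum_sub_distrib, hsum_g, e2]
    have hcz : c = 0 := by
      have hn : (0:ℝ) < (n : ℝ) := by exact_mod_cast Fin.pos i₀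
      rw [hc] at hsv
      simp only [Finset.sum_const, Finset.card_univ, Fintype.card_fin, nsmul_eq_mul] at hsv
      rcases mul_eq_zero.mp hsv with h | h
      · exact absurd h hn.ne'
      · exact h
    have hv0 : v = 0 := by rw [hc, hcz]; ext k; simp
    rw [hv] at hv0
    exact (sub_eq_zero.mp hv0).symm
  have hfix' : (L * Ld) *ᵥ g = g := by rw [hPP]; exact hfix
  set u : Fin n → ℝ := Ld *ᵥ g with hu
  have hgu : ∀ k, g k = (if k = i₀ then (1:ℝ) else 0) - (if k = j₀ then 1 else 0) := by
    intro k
    simp [hg, Pi.single_apply]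
  have huk : ∀ k, u k = Ld k i₀ - Ld k j₀ := by
    intro k
    simp [hu, hg, Matrix.mulVec_sub, Matrix.mulVec_single]
  set r : ℝ := effR Ld i₀ j₀ with hr
  have hLdsym : ∀ a b, Ld a b = Ld b a := by
    intro a b
    conv_lhs => rw [← hLds]
    rfl
  have hgdotu : g ⬝ᵥ u = r := by
    have e : g ⬝ᵥ u = u i₀ - u j₀ := by
      simp [dotProduct, hgu, sub_mul, Finset.sum_sub_distrib]
    rw [e, huk, huk, hr]
    unfold effR
    rw [hLdsym j₀ i₀]
    ring
  set c : ℝ := Δ / (1 + Δ * r) with hc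
  have hden : (1 : ℝ) + Δ * r ≠ 0 := ne_of_gt hpos
  have hcΔ : c * (1 + Δ * r) = Δ := div_mul_cancel₀ _ hden
  have hscal : Δ - c - Δ * c * r = 0 := by linear_combination -hcΔ
  set M : Matrix (Fin n) (Fin n) ℝ := Ld - c • vecMulVec u u with hM
  set G : Matrix (Fin n) (Fin n) ℝ := vecMulVec g g with hG
  have hL₂' : L₂ = L + Δ • G := hL₂
  have hLu : L *ᵥ u = g := by
    rw [hu, Matrix.mulVec_mulVec, hPP, hfix]
  have hLdLu : (Ld * L) *ᵥ u = u := by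
    rw [hu, Matrix.mulVec_mulVec, h2]
  have hgvmLd : g ᵥ* Ld = u := by
    rw [← hLds, Matrix.vecMul_transpose, hu]
  have hL2M : L₂ * M = L * Ld := by
    have hexp : L₂ * M = L * Ld + (Δ - c - Δ * c * r) • vecMulVec g u := by
      rw [hL₂', hM, hG, add_mul, mul_sub, mul_sub, Matrix.mul_smul, Matrix.smul_mul,
        Matrix.smul_mul, Matrix.mul_smul, mul_vecMulVec, hLu, vecMulVec_mul, hgvmLd,
        vecMulVec_mul_vecMulVec, hgdotu]
      module
    rw [hexp, hscal, zero_smul, add_zero]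
  have hMsymm : Mᵀ = M := by
    rw [hM, Matrix.transpose_sub, Matrix.transpose_smul, vecMulVec_transpose, hLds]
  have hL2symm : L₂ᵀ = L₂ := by
    rw [hL₂', hG, Matrix.transpose_add, Matrix.transpose_smul, vecMulVec_transpose, hLs]
  have hML2 : M * L₂ = L * Ld := by
    have e : (M * L₂)ᵀ = L * Ld := by
      rw [Matrix.transpose_mul, hMsymm, hL2symm, hL2M]
    calc M * L₂ = ((M * L₂)ᵀ)ᵀ := by rw [Matrix.transpose_transpose]
      _ = (L * Ld)ᵀ := by rw [e]
      _ = L * Ld := h3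
  have hMPM : IsMoorePenrose L₂ M := by
    refine ⟨?_, ?_, ?_, ?_⟩
    · rw [hL2M, hL₂', hG, mul_add, Matrix.mul_smul, mul_vecMulVec, hfix', h1]
    · rw [hML2, hM, Matrix.mul_sub, Matrix.mul_smul, hPP, h2, mul_vecMulVec, hLdLu]
    · rw [hL2M]; exact h3
    · rw [hML2]; exact h3
  have hLd2 : Ld₂ = M := mp_unique hMP₂ hMPM
  have hMentry : ∀ a b, Ld₂ a b = Ld a b - c * (u a * u b) := by
    intro a b
    rw [hLd2, hM]
    simp [vecMulVec_apply, mul_assoc]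
  have hdiff : effR Ld₂ i j - effR Ld i j = -c * (u i - u j) ^ 2 := by
    unfold effR
    rw [hMentry, hMentry, hMentry]
    ring
  have hs : effR Ld i i₀ + effR Ld j j₀ - effR Ld i j₀ - effR Ld j i₀ = -2 * (u i - u j) := by
    unfold effR
    rw [huk, huk]
    ring
  rw [hdiff, hs, hc]
  field_simp
  ring
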